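/- Let 𝔸 be a cartesian strict monoidal category, [put ∣ get] : (A,A) → (B,B) a lens, and suppose B is inhabited by some k : I → B. If the lens is lawful (a comonoid homomorphism for the sequential-use comonoid structure) then it satisfies the three lens laws: GetPut (put ∘ Δ_A(1_A ⊗ get) = 1_A), PutGet (get ∘ put equals projection to B), and PutPut (put(put(a,b),b') = put(a,b')). -/

import Mathlib

open CategoryTheory MonoidalCategory
universe v u
variable (C : Type u) [Category.{v} C] [CartesianMonoidalCategory C]

structure OpticRep (A B X Y : C) where
  M : C
  fwd : A ⟶ M ⊗ X
  bwd : M ⊗ Y ⟶ B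

variable {C}

inductive OpticRel (A B X Y : C) : OpticRep C A B X Y → OpticRep C A B X Y → Prop
  | slide {M N : C} (f : M ⟶ N) (a : A ⟶ M ⊗ X) (b : N ⊗ Y ⟶ B) :
      OpticRel A B X Y ⟨N, a ≫ (f ▷ X), b⟩ ⟨M, a, (f ▷ Y) ≫ b⟩

def Optic (A B X Y : C) := Quot (OpticRel A B X Y)

def OpticRep.comp {A B X Y E F : C} (h : OpticRep C A B X Y) (k : OpticRep C X Y E F) :
    OpticRep C A B E F where
  M := h.M ⊗ k.M
  fwd := h.fwd ≫ (h.M ◁ k.fwd) ≫ (α_ h.M k.M E).inv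
  bwd := (α_ h.M k.M F).hom ≫ (h.M ◁ k.bwd) ≫ h.bwd

def OpticRep.id (A B : C) : OpticRep C A B A B :=
  ⟨𝟙_ C, (λ_ A).inv, (λ_ B).hom⟩

/-- The counit optic `ε_A : (A,A) → (I,I)` with residual `A`. -/
def epsRep (A : C) : OpticRep C A A (𝟙_ C) (𝟙_ C) :=
  ⟨A, (ρ_ A).inv, (ρ_ A).hom⟩

variable (C) in
/-- A representative of a 2-comb with outer boundary `X`/`Y` and teeth `(A₁,B₁)`, `(A₂,B₂)`. -/
structure Comb2Rep (X A₁ B₁ A₂ B₂ Y : C) where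
  M₁ : C
  M₂ : C
  f₁ : X ⟶ M₁ ⊗ A₁
  f₂ : M₁ ⊗ B₁ ⟶ M₂ ⊗ A₂
  f₃ : M₂ ⊗ B₂ ⟶ Y

/-- Sliding relations for 2-combs. -/
inductive Comb2Rel (X A₁ B₁ A₂ B₂ Y : C) :
    Comb2Rep C X A₁ B₁ A₂ B₂ Y → Comb2Rep C X A₁ B₁ A₂ B₂ Y → Prop
  | slide₁ {M₁ M₁' M₂ : C} (m : M₁ ⟶ M₁') (f₁ : X ⟶ M₁ ⊗ A₁) (f₂ : M₁' ⊗ B₁ ⟶ M₂ ⊗ A₂)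
      (f₃ : M₂ ⊗ B₂ ⟶ Y) :
      Comb2Rel X A₁ B₁ A₂ B₂ Y ⟨M₁', M₂, f₁ ≫ (m ▷ A₁), f₂, f₃⟩
        ⟨M₁, M₂, f₁, (m ▷ B₁) ≫ f₂, f₃⟩
  | slide₂ {M₁ M₂ M₂' : C} (m : M₂ ⟶ M₂') (f₁ : X ⟶ M₁ ⊗ A₁) (f₂ : M₁ ⊗ B₁ ⟶ M₂ ⊗ A₂)
      (f₃ : M₂' ⊗ B₂ ⟶ Y) :
      Comb2Rel X A₁ B₁ A₂ B₂ Y ⟨M₁, M₂', f₁, f₂ ≫ (m ▷ A₂), f₃⟩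
        ⟨M₁, M₂, f₁, f₂, (m ▷ B₂) ≫ f₃⟩

def Comb2 (X A₁ B₁ A₂ B₂ Y : C) := Quot (Comb2Rel X A₁ B₁ A₂ B₂ Y)

/-- The comultiplication 2-comb `Δ_A : (A,A) → (A,A);(A,A)` given by identities. -/
def deltaComb (A : C) : Comb2Rep C A A A A A A :=
  ⟨𝟙_ C, 𝟙_ C, (λ_ A).inv, (λ_ A).hom ≫ (λ_ A).inv, (λ_ A).hom⟩

/-- Fill the first tooth of a 2-comb with an optic. -/
def Comb2Rep.fill₁ {X A₁ B₁ A₂ B₂ Y P Q : C} (c : Comb2Rep C X A₁ B₁ A₂ B₂ Y)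
    (e : OpticRep C A₁ B₁ P Q) : Comb2Rep C X P Q A₂ B₂ Y where
  M₁ := c.M₁ ⊗ e.M
  M₂ := c.M₂
  f₁ := c.f₁ ≫ (c.M₁ ◁ e.fwd) ≫ (α_ c.M₁ e.M P).inv
  f₂ := (α_ c.M₁ e.M Q).hom ≫ (c.M₁ ◁ e.bwd) ≫ c.f₂
  f₃ := c.f₃

/-- Fill the second tooth of a 2-comb with an optic. -/
def Comb2Rep.fill₂ {X A₁ B₁ A₂ B₂ Y P Q : C} (c : Comb2Rep C X A₁ B₁ A₂ B₂ Y)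
    (e : OpticRep C A₂ B₂ P Q) : Comb2Rep C X A₁ B₁ P Q Y where
  M₁ := c.M₁
  M₂ := c.M₂ ⊗ e.M
  f₁ := c.f₁
  f₂ := c.f₂ ≫ (c.M₂ ◁ e.fwd) ≫ (α_ c.M₂ e.M P).inv
  f₃ := (α_ c.M₂ e.M Q).hom ≫ (c.M₂ ◁ e.bwd) ≫ c.f₃

/-- Close off a trivial first tooth `(I,I)`, yielding an optic. -/
def Comb2Rep.close₁ {X A₂ B₂ Y : C} (c : Comb2Rep C X (𝟙_ C) (𝟙_ C) A₂ B₂ Y) :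
    OpticRep C X Y A₂ B₂ :=
  ⟨c.M₂, c.f₁ ≫ c.f₂, c.f₃⟩

/-- Close off a trivial second tooth `(I,I)`, yielding an optic. -/
def Comb2Rep.close₂ {X A₁ B₁ Y : C} (c : Comb2Rep C X A₁ B₁ (𝟙_ C) (𝟙_ C) Y) :
    OpticRep C X Y A₁ B₁ :=
  ⟨c.M₁, c.f₁, c.f₂ ≫ c.f₃⟩

/-- Precompose a 2-comb with an optic on the outer boundary. -/
def opticThenComb {X Y X' Y' A₁ B₁ A₂ B₂ : C} (h : OpticRep C X Y X' Y')
    (c : Comb2Rep C X' A₁ B₁ A₂ B₂ Y') : Comb2Rep C X A₁ B₁ A₂ B₂ Y where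
  M₁ := h.M ⊗ c.M₁
  M₂ := h.M ⊗ c.M₂
  f₁ := h.fwd ≫ (h.M ◁ c.f₁) ≫ (α_ h.M c.M₁ A₁).inv
  f₂ := (α_ h.M c.M₁ B₁).hom ≫ (h.M ◁ c.f₂) ≫ (α_ h.M c.M₂ A₂).inv
  f₃ := (α_ h.M c.M₂ B₂).hom ≫ (h.M ◁ c.f₃) ≫ h.bwd

/-!
In a cartesian category the residual of an optic can be projected away: an optic `(A,B) → (X,Y)`
determines a view `A ⟶ X` and an update `A ⊗ Y ⟶ B`, and a 2-comb likewise determines its three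
stages with all residuals replaced by the inputs seen so far. These data are invariant under
sliding and compose like lenses, so both lawfulness equations become equations between
morphisms of `C`. The counit equation then reads `put ∘ ⟨1, get⟩ = 1`; in the duplication
equation the second stage gives PutGet and the third gives PutPut.
-/

open CartesianMonoidalCategory

namespace CategoryTheory.CartesianMonoidalCategory

lemma whiskerLeft_eq_lift (X : C) {Y Z : C} (f : Y ⟶ Z) :
    X ◁ f = lift (fst X Y) (snd X Y ≫ f) := by
  ext <;> simp

lemma whiskerRight_eq_lift {Y Z : C} (f : Y ⟶ Z) (X : C) :
    f ▷ X = lift (fst Y X ≫ f) (snd Y X) := by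
  ext <;> simp

lemma associator_hom_eq_lift (X Y Z : C) :
    (α_ X Y Z).hom = lift (fst _ _ ≫ fst _ _) (lift (fst _ _ ≫ snd _ _) (snd _ _)) := by
  ext <;> simp

lemma associator_inv_eq_lift (X Y Z : C) :
    (α_ X Y Z).inv = lift (lift (fst _ _) (snd _ _ ≫ fst _ _)) (snd _ _ ≫ snd _ _) := by
  ext <;> simp

end CategoryTheory.CartesianMonoidalCategory

namespace OpticRep

variable {A B X Y : C}

def toLens (r : OpticRep C A B X Y) : (A ⟶ X) × (A ⊗ Y ⟶ B) :=
  (r.fwd ≫ snd _ _, ((r.fwd ≫ fst _ _) ▷ Y) ≫ r.bwd)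

lemma toLens_eq_of_rel {r s : OpticRep C A B X Y} (h : OpticRel A B X Y r s) :
    r.toLens = s.toLens := by
  obtain ⟨f, a, b⟩ := h
  simp [toLens, whiskerRight_eq_lift, comp_lift_assoc]

lemma toLens_eq_of_mk_eq {r s : OpticRep C A B X Y}
    (h : Quot.mk (OpticRel A B X Y) r = Quot.mk _ s) : r.toLens = s.toLens :=
  congrArg (Quot.lift toLens fun _ _ ↦ toLens_eq_of_rel) h

lemma toLens_comp {E F : C} (h : OpticRep C A B X Y) (k : OpticRep C X Y E F) :
    (h.comp k).toLens = (h.toLens.1 ≫ k.toLens.1,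
      lift (fst _ _) ((h.toLens.1 ▷ F) ≫ k.toLens.2) ≫ h.toLens.2) := by
  simp [toLens, comp, whiskerLeft_eq_lift, whiskerRight_eq_lift, associator_hom_eq_lift,
    associator_inv_eq_lift, comp_lift_assoc]

def ofLens (get : A ⟶ B) (put : A ⊗ B ⟶ A) : OpticRep C A A B B :=
  ⟨A, lift (𝟙 A) (𝟙 A) ≫ (A ◁ get), put⟩

lemma toLens_ofLens (get : A ⟶ B) (put : A ⊗ B ⟶ A) : (ofLens get put).toLens = (get, put) := by
  simp [toLens, ofLens]

end OpticRep

lemma toLens_epsRep (A : C) : (epsRep A).toLens = (toUnit A, fst A (𝟙_ C)) := by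
  simp [OpticRep.toLens, epsRep, rightUnitor_hom]

namespace Comb2Rep

variable {X A₁ B₁ A₂ B₂ Y : C}

def toLens (c : Comb2Rep C X A₁ B₁ A₂ B₂ Y) :
    (X ⟶ A₁) × (X ⊗ B₁ ⟶ A₂) × ((X ⊗ B₁) ⊗ B₂ ⟶ Y) :=
  (c.f₁ ≫ snd _ _,
   ((c.f₁ ≫ fst _ _) ▷ B₁) ≫ c.f₂ ≫ snd _ _,
   ((((c.f₁ ≫ fst _ _) ▷ B₁) ≫ c.f₂ ≫ fst _ _) ▷ B₂) ≫ c.f₃)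

lemma toLens_eq_of_rel {c d : Comb2Rep C X A₁ B₁ A₂ B₂ Y} (h : Comb2Rel X A₁ B₁ A₂ B₂ Y c d) :
    c.toLens = d.toLens := by
  obtain ⟨m, f₁, f₂, f₃⟩ | ⟨m, f₁, f₂, f₃⟩ := h <;>
    simp [toLens, whiskerRight_eq_lift, comp_lift_assoc]

lemma toLens_eq_of_mk_eq {c d : Comb2Rep C X A₁ B₁ A₂ B₂ Y}
    (h : Quot.mk (Comb2Rel X A₁ B₁ A₂ B₂ Y) c = Quot.mk _ d) : c.toLens = d.toLens :=
  congrArg (Quot.lift toLens fun _ _ ↦ toLens_eq_of_rel) h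

variable {P Q : C}

lemma toLens_fill₁ (c : Comb2Rep C X A₁ B₁ A₂ B₂ Y) (e : OpticRep C A₁ B₁ P Q) :
    (c.fill₁ e).toLens = (c.toLens.1 ≫ e.toLens.1,
      lift (fst _ _) ((c.toLens.1 ▷ Q) ≫ e.toLens.2) ≫ c.toLens.2.1,
      (lift (fst _ _) ((c.toLens.1 ▷ Q) ≫ e.toLens.2) ▷ B₂) ≫ c.toLens.2.2) := by
  simp [toLens, fill₁, OpticRep.toLens, whiskerLeft_eq_lift, whiskerRight_eq_lift,
    associator_hom_eq_lift, associator_inv_eq_lift, comp_lift_assoc]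

lemma toLens_fill₂ (c : Comb2Rep C X A₁ B₁ A₂ B₂ Y) (e : OpticRep C A₂ B₂ P Q) :
    (c.fill₂ e).toLens = (c.toLens.1, c.toLens.2.1 ≫ e.toLens.1,
      lift (fst _ _) ((c.toLens.2.1 ▷ Q) ≫ e.toLens.2) ≫ c.toLens.2.2) := by
  simp [toLens, fill₂, OpticRep.toLens, whiskerLeft_eq_lift, whiskerRight_eq_lift,
    associator_hom_eq_lift, associator_inv_eq_lift, comp_lift_assoc]

end Comb2Rep

lemma toLens_opticThenComb {X Y X' Y' A₁ B₁ A₂ B₂ : C} (h : OpticRep C X Y X' Y')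
    (c : Comb2Rep C X' A₁ B₁ A₂ B₂ Y') :
    (opticThenComb h c).toLens = (h.toLens.1 ≫ c.toLens.1, (h.toLens.1 ▷ B₁) ≫ c.toLens.2.1,
      lift (fst _ _ ≫ fst _ _) (((h.toLens.1 ▷ B₁) ▷ B₂) ≫ c.toLens.2.2) ≫ h.toLens.2) := by
  simp [Comb2Rep.toLens, opticThenComb, OpticRep.toLens, whiskerLeft_eq_lift, whiskerRight_eq_lift,
    associator_hom_eq_lift, associator_inv_eq_lift, comp_lift_assoc]

lemma toLens_deltaComb (A : C) : (deltaComb A).toLens = (𝟙 A, snd A A, snd (A ⊗ A) A) := by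
  simp [Comb2Rep.toLens, deltaComb, leftUnitor_hom]

section LensLaws

variable {A B : C} {get : A ⟶ B} {put : A ⊗ B ⟶ A}

lemma getPut_of_comp_epsRep (h : Quot.mk (OpticRel A A (𝟙_ C) (𝟙_ C))
      ((OpticRep.ofLens get put).comp (epsRep B)) = Quot.mk _ (epsRep A)) :
    lift (𝟙 A) get ≫ put = 𝟙 A := by
  have h₂ := congrArg Prod.snd (OpticRep.toLens_eq_of_mk_eq h)
  simp only [OpticRep.toLens_comp, OpticRep.toLens_ofLens, toLens_epsRep] at h₂
  simpa [comp_lift_assoc] using (ρ_ A).inv ≫= h₂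

lemma putGet_putPut_of_dup (h : Quot.mk (Comb2Rel A B B B B A)
      (((deltaComb A).fill₁ (OpticRep.ofLens get put)).fill₂ (OpticRep.ofLens get put)) =
      Quot.mk _ (opticThenComb (OpticRep.ofLens get put) (deltaComb B))) :
    put ≫ get = snd A B ∧ (put ▷ B) ≫ put = (fst A B ▷ B) ≫ put := by
  have h' := Comb2Rep.toLens_eq_of_mk_eq h
  simp only [Comb2Rep.toLens_fill₂, Comb2Rep.toLens_fill₁, toLens_opticThenComb,
    OpticRep.toLens_ofLens, toLens_deltaComb, Prod.mk.injEq] at h'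
  obtain ⟨-, hPutGet, hPutPut⟩ := h'
  refine ⟨by simpa using hPutGet, ?_⟩
  simpa [whiskerRight_eq_lift] using hPutPut

end LensLaws

open CartesianMonoidalCategory in
theorem lawful_implies_lens_laws_general {A B : C} (get : A ⟶ B) (put : A ⊗ B ⟶ A)
    (hCounit : Quot.mk (OpticRel A A (𝟙_ C) (𝟙_ C))
        ((⟨A, lift (𝟙 A) (𝟙 A) ≫ (A ◁ get), put⟩ : OpticRep C A A B B).comp (epsRep B)) =
      Quot.mk (OpticRel A A (𝟙_ C) (𝟙_ C)) (epsRep A))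
    (hDup : Quot.mk (Comb2Rel A B B B B A)
        (((deltaComb A).fill₁
            (⟨A, lift (𝟙 A) (𝟙 A) ≫ (A ◁ get), put⟩ : OpticRep C A A B B)).fill₂
          (⟨A, lift (𝟙 A) (𝟙 A) ≫ (A ◁ get), put⟩ : OpticRep C A A B B)) =
      Quot.mk (Comb2Rel A B B B B A)
        (opticThenComb (⟨A, lift (𝟙 A) (𝟙 A) ≫ (A ◁ get), put⟩ : OpticRep C A A B B)
          (deltaComb B))) :
    lift (𝟙 A) (𝟙 A) ≫ (A ◁ get) ≫ put = 𝟙 A ∧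
    put ≫ get = (toUnit A ▷ B) ≫ (λ_ B).hom ∧
    (put ▷ B) ≫ put = (((A ◁ toUnit B) ≫ (ρ_ A).hom) ▷ B) ≫ put := by
  obtain ⟨hPutGet, hPutPut⟩ := putGet_putPut_of_dup hDup
  refine ⟨by simpa using getPut_of_comp_epsRep hCounit, ?_, ?_⟩
  · rwa [whiskerRight_toUnit_comp_leftUnitor_hom]
  · rwa [whiskerLeft_toUnit_comp_rightUnitor_hom]

open CartesianMonoidalCategory in
/-- If `B` is inhabited and a lens is lawful (a comonoid homomorphism for the
sequential-use comonoid structure), then it satisfies the three lens laws. -/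
theorem lawful_implies_lens_laws {A B : C} (get : A ⟶ B) (put : A ⊗ B ⟶ A)
    (k : 𝟙_ C ⟶ B)
    (hCounit : Quot.mk (OpticRel A A (𝟙_ C) (𝟙_ C))
        ((⟨A, lift (𝟙 A) (𝟙 A) ≫ (A ◁ get), put⟩ : OpticRep C A A B B).comp (epsRep B)) =
      Quot.mk (OpticRel A A (𝟙_ C) (𝟙_ C)) (epsRep A))
    (hDup : Quot.mk (Comb2Rel A B B B B A)
        (((deltaComb A).fill₁
            (⟨A, lift (𝟙 A) (𝟙 A) ≫ (A ◁ get), put⟩ : OpticRep C A A B B)).fill₂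
          (⟨A, lift (𝟙 A) (𝟙 A) ≫ (A ◁ get), put⟩ : OpticRep C A A B B)) =
      Quot.mk (Comb2Rel A B B B B A)
        (opticThenComb (⟨A, lift (𝟙 A) (𝟙 A) ≫ (A ◁ get), put⟩ : OpticRep C A A B B)
          (deltaComb B))) :
    lift (𝟙 A) (𝟙 A) ≫ (A ◁ get) ≫ put = 𝟙 A ∧
    put ≫ get = (toUnit A ▷ B) ≫ (λ_ B).hom ∧
    (put ▷ B) ≫ put = (((A ◁ toUnit B) ≫ (ρ_ A).hom) ▷ B) ≫ put :=
  lawful_implies_lens_laws_general get put hCounit hDup
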